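/- arXiv:2101.05231 — 2 statements merged into one kernel-verified Lean document; each statement's English description precedes it below -/
import Mathlib

section
/- Let L ∈ ℝ^{m×n} have compact SVD L = W Σ Vᵀ of rank r, and let C = L(:,J) for J ⊆ [n] be such that V(J,:) has full row rank r. Then ‖C†‖₂ ≤ ‖L†‖₂ · ‖(V(J,:))†‖₂, where † denotes the Moore–Penrose pseudoinverse. -/
open Matrix BigOperators MeasureTheory

noncomputable def specNorm {m n : ℕ} (A : Matrix (Fin m) (Fin n) ℝ) : ℝ :=
  ‖LinearMap.toContinuousLinearMap (Matrix.toEuclideanLin A)‖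

def IsMPInv {m n : ℕ} (A : Matrix (Fin m) (Fin n) ℝ) (B : Matrix (Fin n) (Fin m) ℝ) : Prop :=
  A * B * A = A ∧ B * A * B = B ∧ (A * B)ᵀ = A * B ∧ (B * A)ᵀ = B * A

noncomputable def rowNorm {m n : ℕ} (A : Matrix (Fin m) (Fin n) ℝ) (i : Fin m) : ℝ :=
  Real.sqrt (∑ j, (A i j) ^ 2)

noncomputable def entryMax {m n : ℕ} (A : Matrix (Fin m) (Fin n) ℝ) : ℝ :=
  ⨆ i, ⨆ j, |A i j|

/-!
Write `P = V(J,:)`, so that `C = W Σ Pᵀ`. Since `P` has full column rank, `P† P = 1`, and the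
four Penrose equations then identify `L† = V Σ⁻¹ Wᵀ` and `C† = (P†)ᵀ Σ⁻¹ Wᵀ`. As `V` and `W` have
orthonormal columns, `‖Σ⁻¹‖₂ = ‖Vᵀ L† W‖₂ ≤ ‖L†‖₂`, and hence
`‖C†‖₂ ≤ ‖P†‖₂ ‖Σ⁻¹‖₂ ≤ ‖P†‖₂ ‖L†‖₂`.
-/

open scoped Matrix.Norms.L2Operator

namespace Matrix

variable {m n l p : Type*} [Fintype m] [Fintype n] [Fintype l] [Fintype p]

lemma l2_opNorm_le_one_of_conjTranspose_mul_self_eq_one {𝕜 : Type*} [RCLike 𝕜] [DecidableEq n]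
    {A : Matrix m n 𝕜} (h : Aᴴ * A = 1) : ‖A‖ ≤ 1 := by
  have hsq : ‖A‖ * ‖A‖ ≤ 1 := by
    rw [← l2_opNorm_conjTranspose_mul_self, h, ← diagonal_one, l2_opNorm_diagonal]
    exact pi_norm_le_iff_of_nonneg zero_le_one |>.mpr fun _ => by simp
  nlinarith [norm_nonneg A]

lemma l2_opNorm_transpose [DecidableEq m] [DecidableEq n] (A : Matrix m n ℝ) : ‖Aᵀ‖ = ‖A‖ := by
  rw [← conjTranspose_eq_transpose_of_trivial, l2_opNorm_conjTranspose]

lemma l2_opNorm_mul_mul_le {𝕜 : Type*} [RCLike 𝕜] [DecidableEq n] [DecidableEq l]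
    [DecidableEq p] (A : Matrix m n 𝕜) (B : Matrix n l 𝕜) (C : Matrix l p 𝕜) :
    ‖A * B * C‖ ≤ ‖A‖ * ‖B‖ * ‖C‖ :=
  (l2_opNorm_mul _ _).trans (by gcongr; exact l2_opNorm_mul _ _)

lemma l2_opNorm_transpose_mul_mul_le [DecidableEq m] [DecidableEq n] [DecidableEq l]
    [DecidableEq p] {U : Matrix m n ℝ} {V : Matrix l p ℝ} (hU : Uᵀ * U = 1) (hV : Vᵀ * V = 1)
    (A : Matrix m l ℝ) : ‖Uᵀ * A * V‖ ≤ ‖A‖ :=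
  calc ‖Uᵀ * A * V‖ ≤ ‖Uᵀ‖ * ‖A‖ * ‖V‖ := l2_opNorm_mul_mul_le _ _ _
    _ ≤ 1 * ‖A‖ * 1 := by
        rw [l2_opNorm_transpose]
        gcongr <;> exact l2_opNorm_le_one_of_conjTranspose_mul_self_eq_one ‹_›
    _ = ‖A‖ := by ring

lemma isUnit_of_rank_eq_card {K : Type*} [Field K] [DecidableEq n] {M : Matrix n n K}
    (h : M.rank = Fintype.card n) : IsUnit M := by
  rw [← mulVec_surjective_iff_isUnit, ← coe_mulVecLin, ← LinearMap.range_eq_top]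
  apply Submodule.eq_top_of_finrank_eq
  rw [Module.finrank_fintype_fun_eq_card]
  exact h

end Matrix

lemma specNorm_eq_l2_opNorm {m n : ℕ} (A : Matrix (Fin m) (Fin n) ℝ) : specNorm A = ‖A‖ := rfl

namespace IsMPInv

variable {m n : ℕ} {A : Matrix (Fin m) (Fin n) ℝ} {B B' : Matrix (Fin n) (Fin m) ℝ}

theorem unique (h : IsMPInv A B) (h' : IsMPInv A B') : B = B' := by
  obtain ⟨hABA, hBAB, hAB, hBA⟩ := h
  obtain ⟨hAB'A, hB'AB', hAB', hB'A⟩ := h'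
  have hright : A * B = A * B' := by
    calc A * B = (A * B' * A) * B := by rw [hAB'A]
      _ = (A * B')ᵀ * (A * B)ᵀ := by rw [hAB, hAB', Matrix.mul_assoc]
      _ = ((A * B * A) * B')ᵀ := by rw [← transpose_mul, Matrix.mul_assoc (A * B)]
      _ = A * B' := by rw [hABA, hAB']
  have hleft : B * A = B' * A := by
    calc B * A = B * (A * B' * A) := by rw [hAB'A]
      _ = (B * A)ᵀ * (B' * A)ᵀ := by rw [hBA, hB'A]; simp only [Matrix.mul_assoc]
      _ = (B' * (A * B * A))ᵀ := by rw [← transpose_mul]; simp only [Matrix.mul_assoc]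
      _ = B' * A := by rw [hABA, hB'A]
  calc B = B * A * B := hBAB.symm
    _ = B' * A * B' := by rw [Matrix.mul_assoc, hright, ← Matrix.mul_assoc, hleft]
    _ = B' := hB'AB'

theorem mul_eq_one_of_rank_eq (h : IsMPInv A B) (hrank : A.rank = n) : B * A = 1 := by
  have hidem : B * A * (B * A) = B * A := by rw [← Matrix.mul_assoc, h.2.1]
  have hrank' : (B * A).rank = Fintype.card (Fin n) := by
    refine le_antisymm (rank_le_card_width _) ?_
    calc Fintype.card (Fin n) = A.rank := by rw [hrank, Fintype.card_fin]
      _ = (A * (B * A)).rank := by rw [← Matrix.mul_assoc, h.1]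
      _ ≤ (B * A).rank := rank_mul_le_right _ _
  exact (isUnit_of_rank_eq_card hrank').mul_left_cancel (by rw [hidem, mul_one])

end IsMPInv

theorem isMPInv_mul_mul_transpose {m k r : ℕ} {W : Matrix (Fin m) (Fin r) ℝ}
    {D E : Matrix (Fin r) (Fin r) ℝ} {P Q : Matrix (Fin k) (Fin r) ℝ}
    (hW : Wᵀ * W = 1) (hDE : D * E = 1) (hPQ : Pᵀ * Q = 1) (hQP : (Q * Pᵀ)ᵀ = Q * Pᵀ) :
    IsMPInv (W * D * Pᵀ) (Q * E * Wᵀ) := by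
  have hAB : W * D * Pᵀ * (Q * E * Wᵀ) = W * Wᵀ := by
    simp only [Matrix.mul_assoc]
    rw [← Matrix.mul_assoc Pᵀ, hPQ, Matrix.one_mul, ← Matrix.mul_assoc D, hDE, Matrix.one_mul]
  have hBA : Q * E * Wᵀ * (W * D * Pᵀ) = Q * Pᵀ := by
    simp only [Matrix.mul_assoc]
    rw [← Matrix.mul_assoc Wᵀ, hW, Matrix.one_mul, ← Matrix.mul_assoc E,
      mul_eq_one_comm.mp hDE, Matrix.one_mul]
  refine ⟨?_, ?_, ?_, ?_⟩
  · rw [hAB]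
    simp only [Matrix.mul_assoc]
    rw [← Matrix.mul_assoc Wᵀ W, hW, Matrix.one_mul]
  · rw [hBA]
    simp only [Matrix.mul_assoc]
    rw [← Matrix.mul_assoc Pᵀ Q, hPQ, Matrix.one_mul]
  · rw [hAB, transpose_mul, transpose_transpose]
  · rw [hBA, hQP]

theorem stmt2_general (m n r k : ℕ)
    (L : Matrix (Fin m) (Fin n) ℝ)
    (W : Matrix (Fin m) (Fin r) ℝ) (σ : Fin r → ℝ) (V : Matrix (Fin n) (Fin r) ℝ)
    (hW : Wᵀ * W = 1) (hV : Vᵀ * V = 1) (hσ : ∀ i, 0 < σ i)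
    (hL : L = W * Matrix.diagonal σ * Vᵀ)
    (g : Fin k → Fin n)
    (C : Matrix (Fin m) (Fin k) ℝ) (hC : C = L.submatrix id g)
    (hVJrank : (V.submatrix g id).rank = r)
    (Cd : Matrix (Fin k) (Fin m) ℝ) (hCd : IsMPInv C Cd)
    (Ld : Matrix (Fin n) (Fin m) ℝ) (hLd : IsMPInv L Ld)
    (VJd : Matrix (Fin r) (Fin k) ℝ) (hVJd : IsMPInv (V.submatrix g id) VJd) :
    specNorm Cd ≤ specNorm Ld * specNorm VJd := by
  set P := V.submatrix g id
  set E := diagonal fun i => (σ i)⁻¹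
  have hσE : diagonal σ * E = 1 := by
    rw [diagonal_mul_diagonal, ← diagonal_one]
    exact congrArg diagonal (funext fun i => mul_inv_cancel₀ (hσ i).ne')
  have hCP : C = W * diagonal σ * Pᵀ := by
    subst hC hL
    ext i j
    simp [P, mul_apply]
  have hPinv : VJd * P = 1 := hVJd.mul_eq_one_of_rank_eq hVJrank
  have hLd' : Ld = V * E * Wᵀ := hLd.unique <| hL ▸ isMPInv_mul_mul_transpose hW hσE hV
    (by rw [transpose_mul, transpose_transpose])
  have hCd' : Cd = VJdᵀ * E * Wᵀ := hCd.unique <| hCP ▸ isMPInv_mul_mul_transpose hW hσE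
    (by rw [← transpose_mul, hPinv, transpose_one])
    (by rw [← transpose_mul, transpose_transpose, hVJd.2.2.1])
  have hE : ‖E‖ ≤ ‖Ld‖ :=
    calc ‖E‖ = ‖Vᵀ * Ld * W‖ := by
          rw [hLd']
          simp only [Matrix.mul_assoc]
          rw [hW, Matrix.mul_one, ← Matrix.mul_assoc, hV, Matrix.one_mul]
      _ ≤ ‖Ld‖ := l2_opNorm_transpose_mul_mul_le hV hW Ld
  simp only [specNorm_eq_l2_opNorm]
  calc ‖Cd‖ ≤ ‖VJdᵀ‖ * ‖E‖ * ‖Wᵀ‖ := hCd' ▸ l2_opNorm_mul_mul_le _ _ _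
    _ ≤ ‖VJd‖ * ‖Ld‖ * 1 := by
        rw [l2_opNorm_transpose, l2_opNorm_transpose]
        gcongr
        exact l2_opNorm_le_one_of_conjTranspose_mul_self_eq_one hW
    _ = ‖Ld‖ * ‖VJd‖ := by ring

theorem stmt2 (m n r k : ℕ)
    (L : Matrix (Fin m) (Fin n) ℝ)
    (W : Matrix (Fin m) (Fin r) ℝ) (σ : Fin r → ℝ) (V : Matrix (Fin n) (Fin r) ℝ)
    (hW : Wᵀ * W = 1) (hV : Vᵀ * V = 1) (hσ : ∀ i, 0 < σ i)
    (hL : L = W * Matrix.diagonal σ * Vᵀ)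
    (hrank : L.rank = r)
    (g : Fin k → Fin n) (hg : Function.Injective g)
    (C : Matrix (Fin m) (Fin k) ℝ) (hC : C = L.submatrix id g)
    (hVJrank : (V.submatrix g id).rank = r)
    (Cd : Matrix (Fin k) (Fin m) ℝ) (hCd : IsMPInv C Cd)
    (Ld : Matrix (Fin n) (Fin m) ℝ) (hLd : IsMPInv L Ld)
    (VJd : Matrix (Fin r) (Fin k) ℝ) (hVJd : IsMPInv (V.submatrix g id) VJd) :
    specNorm Cd ≤ specNorm Ld * specNorm VJd :=
  stmt2_general m n r k L W σ V hW hV hσ hL g C hC hVJrank Cd hCd Ld hLd VJd hVJd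
end

section
/- Let S ∈ ℝ^{n×n} be a symmetric α-sparse matrix (each row and column has at most αn nonzero entries), and let W ∈ ℝ^{n×r} have orthonormal columns with μ-incoherence, i.e., ‖Wᵀeᵢ‖₂ ≤ √(μr/n) for all i. Then for every index i and every integer a ≥ 0, ‖Wᵀ Sᵃ eᵢ‖₂ ≤ √(μr/n) · (αn‖S‖_∞)ᵃ. -/
open Matrix BigOperators MeasureTheory

/-! Since `(Wᵀ Sᵃ⁺¹)ᵀ = Sᵀ (Wᵀ Sᵃ)ᵀ`, row `i` of the left side is a combination of the rows
`j` of `(Wᵀ Sᵃ)ᵀ` with coefficients `S j i`. At most `αn` of these are nonzero and each is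
bounded by `‖S‖_∞`, so by the triangle inequality every step of the induction on `a` costs
a factor `αn‖S‖_∞`; the base case `a = 0` is the incoherence bound. -/

lemma abs_le_entryMax {m n : ℕ} (A : Matrix (Fin m) (Fin n) ℝ) (i : Fin m) (j : Fin n) :
    |A i j| ≤ entryMax A :=
  calc |A i j| ≤ ⨆ j, |A i j| :=
      le_ciSup (f := fun j => |A i j|) (Set.finite_range _).bddAbove j
    _ ≤ entryMax A := le_ciSup (f := fun i => ⨆ j, |A i j|) (Set.finite_range _).bddAbove i

lemma entryMax_nonneg {m n : ℕ} (A : Matrix (Fin m) (Fin n) ℝ) : 0 ≤ entryMax A :=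
  Real.iSup_nonneg fun _ => Real.iSup_nonneg fun _ => abs_nonneg _

lemma rowNorm_eq_norm {m n : ℕ} (A : Matrix (Fin m) (Fin n) ℝ) (i : Fin m) :
    rowNorm A i = ‖WithLp.toLp 2 (A i)‖ := by
  simp [rowNorm, EuclideanSpace.norm_eq]

lemma rowNorm_mul_le {l m n : ℕ} (A : Matrix (Fin l) (Fin m) ℝ) (B : Matrix (Fin m) (Fin n) ℝ)
    (i : Fin l) : rowNorm (A * B) i ≤ ∑ j, |A i j| * rowNorm B j := by
  have hrow : (A * B) i = ∑ j, A i j • B j := by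
    ext k
    simp [Matrix.mul_apply]
  simp only [rowNorm_eq_norm, hrow, WithLp.toLp_sum, WithLp.toLp_smul]
  refine (norm_sum_le _ _).trans_eq ?_
  simp [norm_smul]

lemma rowNorm_mul_le_card_mul {l m n : ℕ} {A : Matrix (Fin l) (Fin m) ℝ}
    {B : Matrix (Fin m) (Fin n) ℝ} {i : Fin l} {e c : ℝ} (hA : ∀ j, |A i j| ≤ e)
    (hB : ∀ j, rowNorm B j ≤ c) :
    rowNorm (A * B) i ≤ (Finset.univ.filter (fun j => A i j ≠ 0)).card * (e * c) :=
  calc rowNorm (A * B) i ≤ ∑ j, |A i j| * rowNorm B j := rowNorm_mul_le A B i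
    _ = ∑ j ∈ Finset.univ.filter (fun j => A i j ≠ 0), |A i j| * rowNorm B j :=
      (Finset.sum_filter_of_ne fun j _ hne h0 => by simp [h0] at hne).symm
    _ ≤ ∑ _ ∈ Finset.univ.filter (fun j => A i j ≠ 0), e * c :=
      Finset.sum_le_sum fun j _ =>
        mul_le_mul (hA j) (hB j) (Real.sqrt_nonneg _) ((abs_nonneg _).trans (hA j))
    _ = _ := by rw [Finset.sum_const, nsmul_eq_mul]

theorem stmt7_general (n r : ℕ) (α μ : ℝ)
    (S : Matrix (Fin n) (Fin n) ℝ)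
    (hcol : ∀ j, ((Finset.univ.filter (fun i => S i j ≠ 0)).card : ℝ) ≤ α * n)
    (W : Matrix (Fin n) (Fin r) ℝ)
    (hinc : ∀ i, rowNorm W i ≤ Real.sqrt (μ * r / n)) :
    ∀ (i : Fin n) (a : ℕ),
      rowNorm ((Wᵀ * S ^ a)ᵀ) i ≤ Real.sqrt (μ * r / n) * (α * n * entryMax S) ^ a := by
  intro i a
  induction a generalizing i with
  | zero => simpa using hinc i
  | succ a ih =>
    have hαn : 0 ≤ α * n := (Nat.cast_nonneg _).trans (hcol i)
    have hE := entryMax_nonneg S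
    calc rowNorm ((Wᵀ * S ^ (a + 1))ᵀ) i = rowNorm (Sᵀ * (Wᵀ * S ^ a)ᵀ) i := by
          rw [pow_succ, ← Matrix.mul_assoc, transpose_mul]
      _ ≤ (Finset.univ.filter (fun j => S j i ≠ 0)).card *
            (entryMax S * (Real.sqrt (μ * r / n) * (α * n * entryMax S) ^ a)) :=
          rowNorm_mul_le_card_mul (fun j => abs_le_entryMax S j i) ih
      _ ≤ α * n * (entryMax S * (Real.sqrt (μ * r / n) * (α * n * entryMax S) ^ a)) := by
          gcongr
          exact hcol i
      _ = Real.sqrt (μ * r / n) * (α * n * entryMax S) ^ (a + 1) := by ring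

theorem stmt7 (n r : ℕ) (α μ : ℝ)
    (S : Matrix (Fin n) (Fin n) ℝ) (hsym : Sᵀ = S)
    (hrow : ∀ i, ((Finset.univ.filter (fun j => S i j ≠ 0)).card : ℝ) ≤ α * n)
    (hcol : ∀ j, ((Finset.univ.filter (fun i => S i j ≠ 0)).card : ℝ) ≤ α * n)
    (W : Matrix (Fin n) (Fin r) ℝ) (hW : Wᵀ * W = 1)
    (hinc : ∀ i, rowNorm W i ≤ Real.sqrt (μ * r / n)) :
    ∀ (i : Fin n) (a : ℕ),
      rowNorm ((Wᵀ * S ^ a)ᵀ) i ≤ Real.sqrt (μ * r / n) * (α * n * entryMax S) ^ a :=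
  stmt7_general n r α μ S hcol W hinc
end
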